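/- Let 0 ≤ θ < π/2, let A and B be n×n complex matrices in the sector class S_θ, let 0 < m ≤ M with mI ≤ ℜA ≤ MI and mI ≤ ℜB ≤ MI, and let v ∈ [0,1]. Then ω(A∇_vB) ≤ secθ · K · ω(A!_vB), where ω denotes the numerical radius and K = (M+m)²/(4mM). (This is the f = identity, σ = !_v instance of the paper's numerical radius remark following its Theorem on f(ω(Aσ₁B)).) -/

import Mathlib

open Matrix
open scoped ComplexOrder

/-- The real part `(A + Aᴴ)/2` of a complex matrix. -/
noncomputable def matRe {n : ℕ} (A : Matrix (Fin n) (Fin n) ℂ) : Matrix (Fin n) (Fin n) ℂ :=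
  (2⁻¹ : ℂ) • (A + Aᴴ)

/-- The imaginary part `(A - Aᴴ)/(2i)` of a complex matrix. -/
noncomputable def matIm {n : ℕ} (A : Matrix (Fin n) (Fin n) ℂ) : Matrix (Fin n) (Fin n) ℂ :=
  (2 * Complex.I)⁻¹ • (A - Aᴴ)

/-- Loewner order: `Y - X` is positive semidefinite. -/
def loewnerLE {n : ℕ} (X Y : Matrix (Fin n) (Fin n) ℂ) : Prop := (Y - X).PosSemidef

/-- `A` lies in the sector class `S_θ`: its real part is positive definite and for all `x`,
`|⟨(ℑA)x, x⟩| ≤ tan θ · ⟨(ℜA)x, x⟩`. -/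
def sectorClass {n : ℕ} (θ : ℝ) (A : Matrix (Fin n) (Fin n) ℂ) : Prop :=
  (matRe A).PosDef ∧
    ∀ x : Fin n → ℂ,
      |(star x ⬝ᵥ (matIm A).mulVec x).re| ≤ Real.tan θ * (star x ⬝ᵥ (matRe A).mulVec x).re

/-- The `v`-weighted arithmetic mean `A ∇_v B = v A + (1 - v) B`. -/
noncomputable def amean {n : ℕ} (v : ℝ) (A B : Matrix (Fin n) (Fin n) ℂ) :
    Matrix (Fin n) (Fin n) ℂ :=
  (v : ℂ) • A + ((1 - v : ℝ) : ℂ) • B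

/-- The `v`-weighted harmonic mean `A !_v B = (v A⁻¹ + (1 - v) B⁻¹)⁻¹`. -/
noncomputable def hmean {n : ℕ} (v : ℝ) (A B : Matrix (Fin n) (Fin n) ℂ) :
    Matrix (Fin n) (Fin n) ℂ :=
  ((v : ℂ) • A⁻¹ + ((1 - v : ℝ) : ℂ) • B⁻¹)⁻¹

/-- A linear map on matrices is positive and unital. -/
def IsPosUnitalMap {n : ℕ}
    (Φ : Matrix (Fin n) (Fin n) ℂ →ₗ[ℂ] Matrix (Fin n) (Fin n) ℂ) : Prop :=
  Φ 1 = 1 ∧ ∀ X : Matrix (Fin n) (Fin n) ℂ, X.PosSemidef → (Φ X).PosSemidef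

/-- The numerical radius `ω(A) = sup { |⟨Ax, x⟩| : ‖x‖ = 1 }` (ℓ² norm). -/
noncomputable def numRadius {n : ℕ} (A : Matrix (Fin n) (Fin n) ℂ) : ℝ :=
  sSup {r : ℝ | ∃ x : EuclideanSpace ℂ (Fin n), ‖x‖ = 1 ∧
    r = ‖star (x : Fin n → ℂ) ⬝ᵥ A.mulVec (x : Fin n → ℂ)‖}

/-- The spectral norm (ℓ² → ℓ² operator norm) of a matrix. -/
noncomputable def matSpectralNorm {n : ℕ} (A : Matrix (Fin n) (Fin n) ℂ) : ℝ :=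
  ‖Matrix.toEuclideanCLM (𝕜 := ℂ) A‖

/-!
Fix a unit vector `x`. The sector condition gives `|⟨(A ∇_v B)x, x⟩| ≤ sec θ · ⟨ℜ(A ∇_v B)x, x⟩`,
and `ℜ(A ∇_v B) = ℜA ∇_v ℜB`. The operator Kantorovich inequality gives
`ℜA ∇_v ℜB ≤ K · (ℜA !_v ℜB)`: if `m ≤ X ≤ M` then `X + mM X⁻¹ ≤ M + m`, and every positive `G`
satisfies `M + m - mM G ≤ K G⁻¹`; both are scalar inequalities transported by the continuous
functional calculus, applied to `X = ℜA, ℜB` and `G = v (ℜA)⁻¹ + (1 - v) (ℜB)⁻¹`.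
Next, `ℜA !_v ℜB ≤ ℜ(A !_v B)`: the identity `ℜ(X⁻¹) = X⁻¹ (ℜX) X⁻ᴴ` writes `ℜ(A !_v B)` as
`v P (ℜA) Pᴴ + (1 - v) Q (ℜB) Qᴴ` with `v P + (1 - v) Q = 1`, and completing the square shows that
any such expression dominates the harmonic mean of `ℜA` and `ℜB`. Finally
`⟨ℜ(A !_v B)x, x⟩ = Re ⟨(A !_v B)x, x⟩ ≤ ω(A !_v B)`.
-/

open scoped MatrixOrder

noncomputable def kantorovichConst (m M : ℝ) : ℝ := (M + m) ^ 2 / (4 * m * M)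

lemma kantorovichConst_nonneg {m M : ℝ} (hm : 0 < m) (hM : 0 < M) : 0 ≤ kantorovichConst m M := by
  unfold kantorovichConst
  positivity

section FunctionalCalculus

variable {A : Type*} [Ring A] [StarRing A] [Algebra ℝ A] [TopologicalSpace A]
  [ContinuousFunctionalCalculus ℝ A IsSelfAdjoint]

lemma cfc_const_mul_add_const_mul_inv {a : A} (ha : IsSelfAdjoint a)
    (hpos : ∀ x ∈ spectrum ℝ a, 0 < x) (c d : ℝ) :
    cfc (fun x : ℝ => c * x + d * x⁻¹) a = c • a + d • Ring.inverse a := by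
  have hunit : IsUnit a := spectrum.isUnit_of_zero_notMem ℝ fun h0 => (hpos 0 h0).false
  have hcont : ContinuousOn (fun x : ℝ => x⁻¹) (spectrum ℝ a) :=
    continuousOn_inv₀.mono fun x hx => (hpos x hx).ne'
  rw [cfc_add .., cfc_const_mul .., cfc_const_mul .., cfc_id' .., cfc_ringInverse_id a hunit]

variable [PartialOrder A] [StarOrderedRing A] [NonnegSpectrumClass ℝ A]

lemma add_smul_ringInverse_le_algebraMap {a : A} (ha : IsSelfAdjoint a) {m M : ℝ} (hm : 0 < m)
    (hma : algebraMap ℝ A m ≤ a) (haM : a ≤ algebraMap ℝ A M) :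
    a + (m * M) • Ring.inverse a ≤ algebraMap ℝ A (M + m) := by
  have hspec : ∀ x ∈ spectrum ℝ a, m ≤ x ∧ x ≤ M := fun x hx =>
    ⟨(algebraMap_le_iff_le_spectrum ha).1 hma x hx, (le_algebraMap_iff_spectrum_le ha).1 haM x hx⟩
  have hpos : ∀ x ∈ spectrum ℝ a, 0 < x := fun x hx => hm.trans_le (hspec x hx).1
  have hcont : ContinuousOn (fun x : ℝ => 1 * x + m * M * x⁻¹) (spectrum ℝ a) :=
    (continuousOn_const.mul continuousOn_id).add
      (continuousOn_const.mul (continuousOn_inv₀.mono fun x hx => (hpos x hx).ne'))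
  have hcfc := cfc_const_mul_add_const_mul_inv ha hpos 1 (m * M)
  rw [one_smul] at hcfc
  rw [← hcfc, cfc_le_algebraMap_iff _ _ _ hcont]
  intro x hx
  obtain ⟨hmx, hxM⟩ := hspec x hx
  have hx0 := hpos x hx
  have key : M + m - (1 * x + m * M * x⁻¹) = (M - x) * (x - m) / x := by
    field_simp
    ring
  have : 0 ≤ (M - x) * (x - m) / x := div_nonneg (mul_nonneg (by linarith) (by linarith)) hx0.le
  linarith

lemma algebraMap_le_smul_add_kantorovichConst_smul_ringInverse {a : A}
    (ha : IsStrictlyPositive a) {m M : ℝ} (hm : 0 < m) (hM : 0 < M) :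
    algebraMap ℝ A (M + m) ≤ (m * M) • a + kantorovichConst m M • Ring.inverse a := by
  have hpos : ∀ x ∈ spectrum ℝ a, 0 < x := fun x hx => ha.spectrum_pos hx
  have hcont : ContinuousOn (fun x : ℝ => m * M * x + kantorovichConst m M * x⁻¹)
      (spectrum ℝ a) :=
    (continuousOn_const.mul continuousOn_id).add
      (continuousOn_const.mul (continuousOn_inv₀.mono fun x hx => (hpos x hx).ne'))
  rw [← cfc_const_mul_add_const_mul_inv ha.isSelfAdjoint hpos, algebraMap_le_cfc_iff _ _ _ hcont]
  intro x hx
  have hx0 := hpos x hx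
  have key : m * M * x + kantorovichConst m M * x⁻¹ - (M + m)
      = (2 * m * M * x - (M + m)) ^ 2 / (4 * m * M * x) := by
    unfold kantorovichConst
    field_simp
    ring
  have : 0 ≤ (2 * m * M * x - (M + m)) ^ 2 / (4 * m * M * x) := by positivity
  linarith

end FunctionalCalculus

namespace Matrix

variable {ι 𝕜 : Type*} [RCLike 𝕜]

lemma PosDef.smul_add_one_sub_smul {X Y : Matrix ι ι 𝕜} (hX : X.PosDef) (hY : Y.PosDef) {v : ℝ}
    (hv0 : 0 ≤ v) (hv1 : v ≤ 1) : (v • X + (1 - v) • Y).PosDef := by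
  rcases hv0.eq_or_lt with rfl | hv
  · simpa using hY
  · exact (hX.smul hv).add_posSemidef (hY.posSemidef.smul (sub_nonneg.2 hv1))

lemma re_star_dotProduct_mulVec_le_of_le [Fintype ι] {X Y : Matrix ι ι ℂ} (h : X ≤ Y)
    (x : ι → ℂ) : (star x ⬝ᵥ X *ᵥ x).re ≤ (star x ⬝ᵥ Y *ᵥ x).re := by
  have := (le_iff.1 h).re_dotProduct_nonneg x
  rw [sub_mulVec, dotProduct_sub] at this
  simpa using this

variable [DecidableEq ι]

lemma posDef_of_smul_one_le {X : Matrix ι ι 𝕜} {m : ℝ} (hm : 0 < m) (hmX : m • 1 ≤ X) :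
    X.PosDef := by
  simpa using (PosDef.one.smul hm).add_posSemidef (le_iff.1 hmX)

variable [Fintype ι]

lemma sub_mul_inv_mul_conjTranspose_sub {X Z : Matrix ι ι 𝕜} (hX : X.IsHermitian)
    (hXu : IsUnit X.det) (hZ : Z.IsHermitian) (P : Matrix ι ι 𝕜) :
    (P * X - Z) * X⁻¹ * (P * X - Z)ᴴ = P * X * Pᴴ - P * Z - Z * Pᴴ + Z * X⁻¹ * Z := by
  rw [conjTranspose_sub, conjTranspose_mul, hX.eq, hZ.eq]
  simp only [Matrix.sub_mul, Matrix.mul_sub, Matrix.mul_assoc,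
    mul_nonsing_inv_cancel_left _ _ hXu, nonsing_inv_mul_cancel_left _ _ hXu]
  abel

lemma inv_smul_add_smul_inv_le {X Y : Matrix ι ι 𝕜} (hX : X.PosDef) (hY : Y.PosDef) {v : ℝ}
    (hv0 : 0 ≤ v) (hv1 : v ≤ 1) {P Q : Matrix ι ι 𝕜} (hPQ : v • P + (1 - v) • Q = 1) :
    (v • X⁻¹ + (1 - v) • Y⁻¹)⁻¹ ≤ v • (P * X * Pᴴ) + (1 - v) • (Q * Y * Qᴴ) := by
  set G := v • X⁻¹ + (1 - v) • Y⁻¹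
  have hG : G.PosDef := hX.inv.smul_add_one_sub_smul hY.inv hv0 hv1
  set Z := G⁻¹
  have hZ : Z.IsHermitian := hG.inv.isHermitian
  have hPQ' : v • Pᴴ + (1 - v) • Qᴴ = 1 := by
    simpa [conjTranspose_add, conjTranspose_smul] using congrArg conjTranspose hPQ
  have hPZ : v • (P * Z) + (1 - v) • (Q * Z) = Z := by
    rw [← Matrix.smul_mul, ← Matrix.smul_mul, ← Matrix.add_mul, hPQ, Matrix.one_mul]
  have hZP : v • (Z * Pᴴ) + (1 - v) • (Z * Qᴴ) = Z := by
    rw [← Matrix.mul_smul, ← Matrix.mul_smul, ← Matrix.mul_add, hPQ', Matrix.mul_one]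
  have hZGZ : v • (Z * X⁻¹ * Z) + (1 - v) • (Z * Y⁻¹ * Z) = Z := by
    have h : Z * G * Z = Z := by
      rw [Matrix.mul_assoc, mul_nonsing_inv _ ((isUnit_iff_isUnit_det G).1 hG.isUnit),
        Matrix.mul_one]
    simpa only [G, Matrix.mul_add, Matrix.add_mul, Matrix.mul_smul, Matrix.smul_mul] using h
  have key : v • (P * X * Pᴴ) + (1 - v) • (Q * Y * Qᴴ) - Z
      = v • ((P * X - Z) * X⁻¹ * (P * X - Z)ᴴ)
        + (1 - v) • ((Q * Y - Z) * Y⁻¹ * (Q * Y - Z)ᴴ) := by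
    rw [sub_mul_inv_mul_conjTranspose_sub hX.isHermitian ((isUnit_iff_isUnit_det X).1 hX.isUnit) hZ,
      sub_mul_inv_mul_conjTranspose_sub hY.isHermitian ((isUnit_iff_isUnit_det Y).1 hY.isUnit) hZ]
    linear_combination (norm := module) hPZ + hZP - hZGZ
  rw [le_iff, key]
  exact ((hX.inv.posSemidef.mul_mul_conjTranspose_same _).smul hv0).add
    ((hY.inv.posSemidef.mul_mul_conjTranspose_same _).smul (sub_nonneg.2 hv1))

lemma add_smul_inv_le_of_smul_one_le {X : Matrix ι ι 𝕜} {m M : ℝ} (hm : 0 < m)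
    (hmX : m • 1 ≤ X) (hXM : X ≤ M • 1) : X + (m * M) • X⁻¹ ≤ (M + m) • 1 := by
  have hX := (posDef_of_smul_one_le hm hmX).isHermitian.isSelfAdjoint
  simp only [← Algebra.algebraMap_eq_smul_one] at hmX hXM ⊢
  simpa only [nonsing_inv_eq_ringInverse] using add_smul_ringInverse_le_algebraMap hX hm hmX hXM

lemma smul_one_le_smul_add_kantorovichConst_smul_inv {G : Matrix ι ι 𝕜} (hG : G.PosDef)
    {m M : ℝ} (hm : 0 < m) (hM : 0 < M) :
    (M + m) • 1 ≤ (m * M) • G + kantorovichConst m M • G⁻¹ := by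
  simpa only [nonsing_inv_eq_ringInverse, Algebra.algebraMap_eq_smul_one] using
    algebraMap_le_smul_add_kantorovichConst_smul_ringInverse hG.isStrictlyPositive hm hM

lemma smul_add_smul_le_kantorovichConst_smul_inv {X Y : Matrix ι ι 𝕜} {m M : ℝ} (hm : 0 < m)
    (hmM : m ≤ M) (hmX : m • 1 ≤ X) (hXM : X ≤ M • 1) (hmY : m • 1 ≤ Y) (hYM : Y ≤ M • 1)
    {v : ℝ} (hv0 : 0 ≤ v) (hv1 : v ≤ 1) :
    v • X + (1 - v) • Y ≤ kantorovichConst m M • (v • X⁻¹ + (1 - v) • Y⁻¹)⁻¹ := by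
  set G := v • X⁻¹ + (1 - v) • Y⁻¹
  have hG : G.PosDef := (posDef_of_smul_one_le hm hmX).inv.smul_add_one_sub_smul
    (posDef_of_smul_one_le hm hmY).inv hv0 hv1
  have hXY := add_le_add
    (smul_le_smul_of_nonneg_left (add_smul_inv_le_of_smul_one_le hm hmX hXM) hv0)
    (smul_le_smul_of_nonneg_left (add_smul_inv_le_of_smul_one_le hm hmY hYM) (sub_nonneg.2 hv1))
  calc v • X + (1 - v) • Y ≤ (M + m) • 1 - (m * M) • G := by
        rw [le_sub_iff_add_le]
        convert hXY using 1 <;> module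
    _ ≤ kantorovichConst m M • G⁻¹ := by
        rw [sub_le_iff_le_add']
        exact smul_one_le_smul_add_kantorovichConst_smul_inv hG hm (hm.trans_le hmM)

end Matrix

section RealPart

variable {n : ℕ}

lemma loewnerLE_iff {X Y : Matrix (Fin n) (Fin n) ℂ} : loewnerLE X Y ↔ X ≤ Y := Iff.rfl

lemma amean_eq_smul_add_smul (v : ℝ) (A B : Matrix (Fin n) (Fin n) ℂ) :
    amean v A B = v • A + (1 - v) • B := by
  simp only [amean, Complex.coe_smul]

lemma hmean_eq_inv_smul_add_smul (v : ℝ) (A B : Matrix (Fin n) (Fin n) ℂ) :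
    hmean v A B = (v • A⁻¹ + (1 - v) • B⁻¹)⁻¹ := by
  simp only [hmean, Complex.coe_smul]

lemma star_dotProduct_conjTranspose_mulVec (A : Matrix (Fin n) (Fin n) ℂ) (x : Fin n → ℂ) :
    star x ⬝ᵥ Aᴴ *ᵥ x = star (star x ⬝ᵥ A *ᵥ x) := by
  rw [dotProduct_mulVec, ← star_mulVec, ← star_dotProduct_star, star_star, dotProduct_comm]

lemma star_dotProduct_matRe_mulVec (A : Matrix (Fin n) (Fin n) ℂ) (x : Fin n → ℂ) :
    star x ⬝ᵥ matRe A *ᵥ x = ((star x ⬝ᵥ A *ᵥ x).re : ℂ) := by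
  rw [matRe, smul_mulVec, add_mulVec, dotProduct_smul, dotProduct_add,
    star_dotProduct_conjTranspose_mulVec, Complex.star_def, Complex.add_conj, smul_eq_mul]
  push_cast
  ring

lemma star_dotProduct_matIm_mulVec (A : Matrix (Fin n) (Fin n) ℂ) (x : Fin n → ℂ) :
    star x ⬝ᵥ matIm A *ᵥ x = ((star x ⬝ᵥ A *ᵥ x).im : ℂ) := by
  rw [matIm, smul_mulVec, sub_mulVec, dotProduct_smul, dotProduct_sub,
    star_dotProduct_conjTranspose_mulVec, Complex.star_def, Complex.sub_conj, smul_eq_mul]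
  field_simp
  push_cast
  ring

lemma re_star_dotProduct_matRe_mulVec (A : Matrix (Fin n) (Fin n) ℂ) (x : Fin n → ℂ) :
    (star x ⬝ᵥ matRe A *ᵥ x).re = (star x ⬝ᵥ A *ᵥ x).re := by
  rw [star_dotProduct_matRe_mulVec, Complex.ofReal_re]

lemma matRe_smul_add_smul (a b : ℝ) (A B : Matrix (Fin n) (Fin n) ℂ) :
    matRe (a • A + b • B) = a • matRe A + b • matRe B := by
  simp only [matRe, conjTranspose_add, conjTranspose_smul, star_trivial]
  module

lemma matRe_inv {A : Matrix (Fin n) (Fin n) ℂ} (hA : IsUnit A) :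
    matRe A⁻¹ = A⁻¹ * matRe A * A⁻¹ᴴ := by
  have hA' := (isUnit_iff_isUnit_det A).1 hA
  have hAH : IsUnit Aᴴ.det := by
    rw [det_conjTranspose]
    exact hA'.star
  rw [matRe, matRe, conjTranspose_nonsing_inv, Matrix.mul_smul, Matrix.smul_mul]
  simp only [Matrix.mul_add, Matrix.add_mul, Matrix.mul_assoc, mul_nonsing_inv _ hAH,
    nonsing_inv_mul_cancel_left _ _ hA', Matrix.mul_one, add_comm]

lemma isUnit_of_posDef_matRe {A : Matrix (Fin n) (Fin n) ℂ} (hA : (matRe A).PosDef) :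
    IsUnit A := by
  refine mulVec_injective_iff_isUnit.1 fun x y hxy => ?_
  by_contra hne
  have h := hA.re_dotProduct_pos (sub_ne_zero.2 hne)
  rw [star_dotProduct_matRe_mulVec, mulVec_sub, hxy, sub_self, dotProduct_zero] at h
  simp at h

lemma posDef_matRe_inv {A : Matrix (Fin n) (Fin n) ℂ} (hA : (matRe A).PosDef) :
    (matRe A⁻¹).PosDef := by
  have hu := isUnit_of_posDef_matRe hA
  rw [matRe_inv hu]
  exact hA.mul_mul_conjTranspose_same
    (vecMul_injective_iff_isUnit.2 (isUnit_nonsing_inv_iff.2 hu))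

end RealPart

section Means

variable {n : ℕ} {A B : Matrix (Fin n) (Fin n) ℂ} {v : ℝ}

lemma hmean_matRe_le_matRe_hmean (hA : (matRe A).PosDef) (hB : (matRe B).PosDef)
    (hv0 : 0 ≤ v) (hv1 : v ≤ 1) : hmean v (matRe A) (matRe B) ≤ matRe (hmean v A B) := by
  have hAu := isUnit_of_posDef_matRe hA
  have hBu := isUnit_of_posDef_matRe hB
  set G := v • A⁻¹ + (1 - v) • B⁻¹
  have hReG : matRe G = v • matRe A⁻¹ + (1 - v) • matRe B⁻¹ := matRe_smul_add_smul _ _ _ _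
  have hGu : IsUnit G := isUnit_of_posDef_matRe <| hReG ▸
    (posDef_matRe_inv hA).smul_add_one_sub_smul (posDef_matRe_inv hB) hv0 hv1
  have hPQ : v • (G⁻¹ * A⁻¹) + (1 - v) • (G⁻¹ * B⁻¹) = 1 := by
    rw [← Matrix.mul_smul, ← Matrix.mul_smul, ← Matrix.mul_add,
      nonsing_inv_mul _ ((isUnit_iff_isUnit_det G).1 hGu)]
  have hReGinv : matRe G⁻¹ = v • ((G⁻¹ * A⁻¹) * matRe A * (G⁻¹ * A⁻¹)ᴴ)
      + (1 - v) • ((G⁻¹ * B⁻¹) * matRe B * (G⁻¹ * B⁻¹)ᴴ) := by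
    rw [matRe_inv hGu, hReG, matRe_inv hAu, matRe_inv hBu]
    simp only [Matrix.mul_add, Matrix.add_mul, Matrix.mul_smul, Matrix.smul_mul,
      conjTranspose_mul, Matrix.mul_assoc]
  rw [hmean_eq_inv_smul_add_smul, hmean_eq_inv_smul_add_smul, hReGinv]
  exact inv_smul_add_smul_inv_le hA hB hv0 hv1 hPQ

lemma matRe_amean_le_kantorovichConst_smul_matRe_hmean {m M : ℝ} (hm : 0 < m) (hmM : m ≤ M)
    (hmA : m • 1 ≤ matRe A) (hAM : matRe A ≤ M • 1) (hmB : m • 1 ≤ matRe B)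
    (hBM : matRe B ≤ M • 1) (hv0 : 0 ≤ v) (hv1 : v ≤ 1) :
    matRe (amean v A B) ≤ kantorovichConst m M • matRe (hmean v A B) :=
  calc matRe (amean v A B) = amean v (matRe A) (matRe B) := by
        rw [amean_eq_smul_add_smul, amean_eq_smul_add_smul, matRe_smul_add_smul]
    _ ≤ kantorovichConst m M • hmean v (matRe A) (matRe B) := by
        rw [amean_eq_smul_add_smul, hmean_eq_inv_smul_add_smul]
        exact smul_add_smul_le_kantorovichConst_smul_inv hm hmM hmA hAM hmB hBM hv0 hv1
    _ ≤ kantorovichConst m M • matRe (hmean v A B) :=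
        smul_le_smul_of_nonneg_left (hmean_matRe_le_matRe_hmean (posDef_of_smul_one_le hm hmA)
          (posDef_of_smul_one_le hm hmB) hv0 hv1) (kantorovichConst_nonneg hm (hm.trans_le hmM))

end Means

lemma Complex.norm_le_inv_cos_mul_re {z : ℂ} {θ : ℝ} (hcos : 0 < Real.cos θ) (hre : 0 ≤ z.re)
    (him : |z.im| ≤ Real.tan θ * z.re) : ‖z‖ ≤ (Real.cos θ)⁻¹ * z.re := by
  have hsec : (Real.cos θ)⁻¹ ^ 2 = 1 + Real.tan θ ^ 2 := by
    rw [inv_pow, ← Real.inv_one_add_tan_sq hcos.ne', inv_inv]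
  have him2 : z.im ^ 2 ≤ (Real.tan θ * z.re) ^ 2 := by
    rw [← sq_abs]
    exact pow_le_pow_left₀ (abs_nonneg _) him 2
  rw [← Real.sqrt_sq (by positivity : 0 ≤ (Real.cos θ)⁻¹ * z.re), Complex.norm_def,
    Complex.normSq_apply]
  apply Real.sqrt_le_sqrt
  rw [mul_pow, hsec]
  nlinarith

namespace sectorClass

variable {n : ℕ} {θ : ℝ} {A B : Matrix (Fin n) (Fin n) ℂ}

lemma norm_star_dotProduct_mulVec_le (hA : sectorClass θ A) (hcos : 0 < Real.cos θ)
    (x : Fin n → ℂ) : ‖star x ⬝ᵥ A *ᵥ x‖ ≤ (Real.cos θ)⁻¹ * (star x ⬝ᵥ A *ᵥ x).re := by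
  have hre : 0 ≤ (star x ⬝ᵥ A *ᵥ x).re := by
    rw [← re_star_dotProduct_matRe_mulVec]
    exact hA.1.posSemidef.re_dotProduct_nonneg x
  have him := hA.2 x
  rw [star_dotProduct_matIm_mulVec, star_dotProduct_matRe_mulVec, Complex.ofReal_re,
    Complex.ofReal_re] at him
  exact Complex.norm_le_inv_cos_mul_re hcos hre him

lemma norm_star_dotProduct_amean_mulVec_le (hA : sectorClass θ A) (hB : sectorClass θ B)
    (hcos : 0 < Real.cos θ) {v : ℝ} (hv0 : 0 ≤ v) (hv1 : v ≤ 1) (x : Fin n → ℂ) :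
    ‖star x ⬝ᵥ amean v A B *ᵥ x‖ ≤ (Real.cos θ)⁻¹ * (star x ⬝ᵥ amean v A B *ᵥ x).re := by
  set a := star x ⬝ᵥ A *ᵥ x
  set b := star x ⬝ᵥ B *ᵥ x
  have hsplit : star x ⬝ᵥ amean v A B *ᵥ x = v • a + (1 - v) • b := by
    rw [amean_eq_smul_add_smul, add_mulVec, smul_mulVec, smul_mulVec, dotProduct_add,
      dotProduct_smul, dotProduct_smul]
  have hv1' : 0 ≤ 1 - v := sub_nonneg.2 hv1
  rw [hsplit]
  calc ‖v • a + (1 - v) • b‖ ≤ v * ‖a‖ + (1 - v) * ‖b‖ := by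
        refine (norm_add_le _ _).trans_eq ?_
        rw [norm_smul, norm_smul, Real.norm_of_nonneg hv0, Real.norm_of_nonneg hv1']
    _ ≤ v * ((Real.cos θ)⁻¹ * a.re) + (1 - v) * ((Real.cos θ)⁻¹ * b.re) := by
        gcongr
        exacts [hA.norm_star_dotProduct_mulVec_le hcos x, hB.norm_star_dotProduct_mulVec_le hcos x]
    _ = (Real.cos θ)⁻¹ * (v • a + (1 - v) • b).re := by
        simp only [Complex.add_re, Complex.smul_re, smul_eq_mul]
        ring

end sectorClass

section NumericalRadius

variable {n : ℕ}

lemma norm_star_dotProduct_mulVec_le_numRadius (C : Matrix (Fin n) (Fin n) ℂ)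
    {x : EuclideanSpace ℂ (Fin n)} (hx : ‖x‖ = 1) :
    ‖star (x : Fin n → ℂ) ⬝ᵥ C *ᵥ (x : Fin n → ℂ)‖ ≤ numRadius C := by
  refine le_csSup ⟨‖toEuclideanCLM (𝕜 := ℂ) C‖, ?_⟩ ⟨x, hx, rfl⟩
  rintro _ ⟨y, hy, rfl⟩
  have hinner : star (y : Fin n → ℂ) ⬝ᵥ C *ᵥ (y : Fin n → ℂ)
      = inner ℂ y (toEuclideanCLM (𝕜 := ℂ) C y) := by
    rw [EuclideanSpace.inner_eq_star_dotProduct, dotProduct_comm _ (star _)]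
    rfl
  rw [hinner]
  simpa [hy] using (norm_inner_le_norm y _).trans
    (mul_le_mul_of_nonneg_left ((toEuclideanCLM (𝕜 := ℂ) C).le_opNorm y) (norm_nonneg _))

lemma numRadius_le_mul_numRadius {C D : Matrix (Fin n) (Fin n) ℂ} {c : ℝ} (hc : 0 ≤ c)
    (h : ∀ x : Fin n → ℂ, ‖star x ⬝ᵥ C *ᵥ x‖ ≤ c * (star x ⬝ᵥ D *ᵥ x).re) :
    numRadius C ≤ c * numRadius D := by
  have hD : 0 ≤ numRadius D := Real.sSup_nonneg (by rintro _ ⟨x, -, rfl⟩; exact norm_nonneg _)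
  refine Real.sSup_le ?_ (mul_nonneg hc hD)
  rintro _ ⟨x, hx, rfl⟩
  exact (h x).trans (mul_le_mul_of_nonneg_left
    ((Complex.re_le_norm _).trans (norm_star_dotProduct_mulVec_le_numRadius D hx)) hc)

end NumericalRadius

theorem stmt16 {n : ℕ} (θ : ℝ) (hθ0 : 0 ≤ θ) (hθ1 : θ < Real.pi / 2)
    (A B : Matrix (Fin n) (Fin n) ℂ)
    (hA : sectorClass θ A) (hB : sectorClass θ B)
    (m M : ℝ) (hm : 0 < m) (hmM : m ≤ M)
    (hmA : loewnerLE (m • (1 : Matrix (Fin n) (Fin n) ℂ)) (matRe A))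
    (hAM : loewnerLE (matRe A) (M • (1 : Matrix (Fin n) (Fin n) ℂ)))
    (hmB : loewnerLE (m • (1 : Matrix (Fin n) (Fin n) ℂ)) (matRe B))
    (hBM : loewnerLE (matRe B) (M • (1 : Matrix (Fin n) (Fin n) ℂ)))
    (v : ℝ) (hv0 : 0 ≤ v) (hv1 : v ≤ 1) :
    numRadius (amean v A B) ≤ (Real.cos θ)⁻¹ * ((M + m) ^ 2 / (4 * m * M)) * numRadius (hmean v A B) := by
  have hcos : 0 < Real.cos θ := Real.cos_pos_of_mem_Ioo ⟨by linarith [Real.pi_pos], hθ1⟩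
  have hRe := matRe_amean_le_kantorovichConst_smul_matRe_hmean hm hmM (loewnerLE_iff.1 hmA)
    (loewnerLE_iff.1 hAM) (loewnerLE_iff.1 hmB) (loewnerLE_iff.1 hBM) hv0 hv1
  have hK := kantorovichConst_nonneg hm (hm.trans_le hmM)
  refine numRadius_le_mul_numRadius (c := (Real.cos θ)⁻¹ * kantorovichConst m M) (by positivity)
    fun x => ?_
  calc ‖star x ⬝ᵥ amean v A B *ᵥ x‖
      ≤ (Real.cos θ)⁻¹ * (star x ⬝ᵥ matRe (amean v A B) *ᵥ x).re := by
        rw [re_star_dotProduct_matRe_mulVec]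
        exact hA.norm_star_dotProduct_amean_mulVec_le hB hcos hv0 hv1 x
    _ ≤ (Real.cos θ)⁻¹ * (star x ⬝ᵥ (kantorovichConst m M • matRe (hmean v A B)) *ᵥ x).re :=
        mul_le_mul_of_nonneg_left (re_star_dotProduct_mulVec_le_of_le hRe x) (inv_nonneg.2 hcos.le)
    _ = (Real.cos θ)⁻¹ * kantorovichConst m M * (star x ⬝ᵥ hmean v A B *ᵥ x).re := by
        rw [smul_mulVec, dotProduct_smul, Complex.smul_re, re_star_dotProduct_matRe_mulVec,
          smul_eq_mul, mul_assoc]
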